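/- Let n ≥ 1, let μ : ℝⁿ → ℝ be a smooth function with μ(x) > 0 for all x, let w : ℝⁿ → ℝⁿ be a smooth vector field, and let f : ℝⁿ → ℝ be a smooth function. Define u := μ^{−1/2}·w + μ^{−1}·∇f − f·∇(μ^{−1}), p := div(μ^{1/2}·w) + 2·Δf, and σ_{jk} := μ·(∂uₖ/∂xⱼ + ∂uⱼ/∂xₖ) − p·δ_{jk}. Then (u, p) satisfies the stationary Stokes equations Σₖ ∂σ_{jk}/∂xₖ = 0 for all j and div u = 0 on ℝⁿ if and only if (w, f) satisfies the system: for each j, μ^{1/2}·Δwⱼ − 2·(∂(μ^{1/2})/∂xⱼ)·div w − 2·Σₖ ∂/∂xₖ( μ·∂²(μ^{−1})/∂xⱼ∂xₖ )·f − 2·μ·Σₖ (∂²(μ^{−1})/∂xⱼ∂xₖ)·(∂f/∂xₖ) − 2·Σₖ (∂²(μ^{1/2})/∂xₖ∂xⱼ)·wₖ − Δ(μ^{1/2})·wⱼ = 0, together with μ^{−1/2}·div w + ⟨∇(μ^{−1/2}), w⟩ + μ^{−1}·Δf − f·Δ(μ^{−1}) = 0. -/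

import Mathlib

namespace StokesEuclid

variable {n : ℕ}

/-- The partial derivative `∂φ/∂xⱼ` of a scalar function `φ : ℝⁿ → ℝ`. -/
noncomputable def pd (j : Fin n) (φ : (Fin n → ℝ) → ℝ) : (Fin n → ℝ) → ℝ :=
  fun x => fderiv ℝ φ x (Pi.single j 1)

/-- The divergence `div v = Σⱼ ∂vⱼ/∂xⱼ` of a vector field `v : ℝⁿ → ℝⁿ`. -/
noncomputable def diverg (v : (Fin n → ℝ) → (Fin n → ℝ)) : (Fin n → ℝ) → ℝ :=
  fun x => ∑ j, pd j (fun y => v y j) x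

/-- The gradient `∇φ` of a scalar function `φ : ℝⁿ → ℝ`. -/
noncomputable def grad (φ : (Fin n → ℝ) → ℝ) : (Fin n → ℝ) → (Fin n → ℝ) :=
  fun x j => pd j φ x

/-- The Laplacian `Δφ = Σⱼ ∂²φ/∂xⱼ²` of a scalar function `φ : ℝⁿ → ℝ`. -/
noncomputable def lap (φ : (Fin n → ℝ) → ℝ) : (Fin n → ℝ) → ℝ :=
  fun x => ∑ j, pd j (pd j φ) x

/-- The Euclidean inner product on `ℝⁿ`. -/
def inner' (a b : Fin n → ℝ) : ℝ := ∑ j, a j * b j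

end StokesEuclid

open StokesEuclid

namespace StokesEuclid

variable {n : ℕ}

def Sm (φ : (Fin n → ℝ) → ℝ) : Prop := ∀ x, ContDiffAt ℝ (⊤ : ℕ∞) φ x

namespace Sm

theorem diffAt {φ : (Fin n → ℝ) → ℝ} (h : Sm φ) (x : Fin n → ℝ) :
    DifferentiableAt ℝ φ x := (h x).differentiableAt (by simp)

theorem add {φ ψ : (Fin n → ℝ) → ℝ} (hφ : Sm φ) (hψ : Sm ψ) :
    Sm (fun y => φ y + ψ y) := fun x => (hφ x).add (hψ x)

theorem mul {φ ψ : (Fin n → ℝ) → ℝ} (hφ : Sm φ) (hψ : Sm ψ) :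
    Sm (fun y => φ y * ψ y) := fun x => (hφ x).mul (hψ x)

theorem neg {φ : (Fin n → ℝ) → ℝ} (hφ : Sm φ) : Sm (fun y => -φ y) :=
  fun x => (hφ x).neg

theorem sub {φ ψ : (Fin n → ℝ) → ℝ} (hφ : Sm φ) (hψ : Sm ψ) :
    Sm (fun y => φ y - ψ y) := fun x => (hφ x).sub (hψ x)

theorem const (c : ℝ) : Sm (fun _ : Fin n → ℝ => c) := fun _ => contDiffAt_const

theorem inv {φ : (Fin n → ℝ) → ℝ} (hφ : Sm φ) (h0 : ∀ x, φ x ≠ 0) :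
    Sm (fun y => (φ y)⁻¹) := fun x => (hφ x).inv (h0 x)

theorem sum {ι : Type*} {s : Finset ι} {F : ι → (Fin n → ℝ) → ℝ}
    (h : ∀ k, Sm (F k)) : Sm (fun y => ∑ k ∈ s, F k y) :=
  fun x => ContDiffAt.sum (fun k _ => h k x)

theorem pd {φ : (Fin n → ℝ) → ℝ} (hφ : Sm φ) (j : Fin n) : Sm (pd j φ) := by
  intro x
  exact ((hφ x).fderiv_right (by exact_mod_cast le_top)).clm_apply contDiffAt_const

end Sm

theorem pd_add {φ ψ : (Fin n → ℝ) → ℝ} (hφ : Sm φ) (hψ : Sm ψ) (j : Fin n) (x : Fin n → ℝ) :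
    pd j (fun y => φ y + ψ y) x = pd j φ x + pd j ψ x := by
  simp only [pd, fderiv_fun_add (hφ.diffAt x) (hψ.diffAt x), ContinuousLinearMap.add_apply]

theorem pd_sub {φ ψ : (Fin n → ℝ) → ℝ} (hφ : Sm φ) (hψ : Sm ψ) (j : Fin n) (x : Fin n → ℝ) :
    pd j (fun y => φ y - ψ y) x = pd j φ x - pd j ψ x := by
  simp only [pd, fderiv_fun_sub (hφ.diffAt x) (hψ.diffAt x), ContinuousLinearMap.sub_apply]

theorem pd_neg (φ : (Fin n → ℝ) → ℝ) (j : Fin n) (x : Fin n → ℝ) :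
    pd j (fun y => -φ y) x = -pd j φ x := by
  simp only [pd, fderiv_fun_neg, ContinuousLinearMap.neg_apply]

theorem pd_mul {φ ψ : (Fin n → ℝ) → ℝ} (hφ : Sm φ) (hψ : Sm ψ) (j : Fin n) (x : Fin n → ℝ) :
    pd j (fun y => φ y * ψ y) x = pd j φ x * ψ x + φ x * pd j ψ x := by
  simp only [pd, fderiv_fun_mul (hφ.diffAt x) (hψ.diffAt x), ContinuousLinearMap.add_apply,
    ContinuousLinearMap.smul_apply, smul_eq_mul]
  ring

theorem pd_const (c : ℝ) (j : Fin n) (x : Fin n → ℝ) :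
    pd j (fun _ => c) x = 0 := by
  simp [pd]

theorem pd_sum {ι : Type*} {s : Finset ι} {F : ι → (Fin n → ℝ) → ℝ}
    (h : ∀ k, Sm (F k)) (j : Fin n) (x : Fin n → ℝ) :
    pd j (fun y => ∑ k ∈ s, F k y) x = ∑ k ∈ s, pd j (F k) x := by
  simp only [pd, fderiv_fun_sum (fun k _ => (h k).diffAt x)]
  simp

theorem pd_inv {φ : (Fin n → ℝ) → ℝ} (hφ : Sm φ) (h0 : ∀ x, φ x ≠ 0) (j : Fin n) (x : Fin n → ℝ) :
    pd j (fun y => (φ y)⁻¹) x = -(φ x * φ x)⁻¹ * pd j φ x := by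
  have h := (hasDerivAt_inv (h0 x)).comp_hasFDerivAt x (hφ.diffAt x).hasFDerivAt
  have h2 : (fun y => (φ y)⁻¹) = (fun y => y⁻¹) ∘ φ := rfl
  simp only [pd, h2, h.fderiv, ContinuousLinearMap.smul_apply, smul_eq_mul, pow_two]

theorem pd_comm {φ : (Fin n → ℝ) → ℝ} (hφ : Sm φ) (j k : Fin n) (x : Fin n → ℝ) :
    pd j (pd k φ) x = pd k (pd j φ) x := by
  have hd : DifferentiableAt ℝ (fderiv ℝ φ) x :=
    ((hφ x).fderiv_right (m := (⊤:ℕ∞)) (by exact_mod_cast le_top)).differentiableAt (by simp)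
  have h1 : ∀ (a b : Fin n → ℝ),
      fderiv ℝ (fun y => fderiv ℝ φ y a) x b = fderiv ℝ (fderiv ℝ φ) x b a := by
    intro a b
    rw [fderiv_clm_apply hd (differentiableAt_const _)]
    simp
  have hsymm := (hφ x).isSymmSndFDerivAt (by
    have : ((2:ℕ∞) : WithTop ℕ∞) ≤ ((⊤:ℕ∞) : WithTop ℕ∞) := mod_cast le_top
    simpa using this)
  unfold pd
  rw [h1, h1, hsymm]

theorem pd_comm_fun {φ : (Fin n → ℝ) → ℝ} (hφ : Sm φ) (j k : Fin n) :
    pd j (pd k φ) = pd k (pd j φ) := funext (pd_comm hφ j k)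

theorem pd_add_fun {φ ψ : (Fin n → ℝ) → ℝ} (hφ : Sm φ) (hψ : Sm ψ) (j : Fin n) :
    pd j (fun y => φ y + ψ y) = fun x => pd j φ x + pd j ψ x :=
  funext (pd_add hφ hψ j)

theorem pd_sub_fun {φ ψ : (Fin n → ℝ) → ℝ} (hφ : Sm φ) (hψ : Sm ψ) (j : Fin n) :
    pd j (fun y => φ y - ψ y) = fun x => pd j φ x - pd j ψ x :=
  funext (pd_sub hφ hψ j)

theorem pd_neg_fun (φ : (Fin n → ℝ) → ℝ) (j : Fin n) :
    pd j (fun y => -φ y) = fun x => -pd j φ x :=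
  funext (pd_neg φ j)

theorem pd_mul_fun {φ ψ : (Fin n → ℝ) → ℝ} (hφ : Sm φ) (hψ : Sm ψ) (j : Fin n) :
    pd j (fun y => φ y * ψ y) = fun x => pd j φ x * ψ x + φ x * pd j ψ x :=
  funext (pd_mul hφ hψ j)

theorem pd_const_fun (c : ℝ) (j : Fin n) :
    pd j (fun _ : Fin n → ℝ => c) = fun _ => 0 :=
  funext (pd_const c j)

theorem pd_sum_fun {ι : Type*} {s : Finset ι} {F : ι → (Fin n → ℝ) → ℝ}
    (h : ∀ k, Sm (F k)) (j : Fin n) :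
    pd j (fun y => ∑ k ∈ s, F k y) = fun x => ∑ k ∈ s, pd j (F k) x :=
  funext (pd_sum h j)

theorem pd_inv_fun {φ : (Fin n → ℝ) → ℝ} (hφ : Sm φ) (h0 : ∀ x, φ x ≠ 0) (j : Fin n) :
    pd j (fun y => (φ y)⁻¹) = fun x => -(φ x * φ x)⁻¹ * pd j φ x :=
  funext (pd_inv hφ h0 j)

end StokesEuclid

set_option maxHeartbeats 4000000 in
/-- Euclidean reduction of the stationary Stokes equations: with
`u = μ^{−1/2} w + μ^{−1} ∇f − f ∇(μ^{−1})`, `p = div(μ^{1/2} w) + 2Δf`, and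
`σ_{jk} = μ(∂uₖ/∂xⱼ + ∂uⱼ/∂xₖ) − p δ_{jk}`, the pair `(u, p)` satisfies the Stokes
equations `Σₖ ∂σ_{jk}/∂xₖ = 0` (for all `j`) and `div u = 0` on `ℝⁿ` if and only if
`(w, f)` satisfies the transformed second-order system. -/
theorem stokes_iff_transformed_system (n : ℕ) (hn : 1 ≤ n)
    (μ : (Fin n → ℝ) → ℝ) (hμ : ContDiff ℝ (⊤ : ℕ∞) μ) (hμpos : ∀ x, 0 < μ x)
    (w : (Fin n → ℝ) → (Fin n → ℝ)) (hw : ContDiff ℝ (⊤ : ℕ∞) w)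
    (f : (Fin n → ℝ) → ℝ) (hf : ContDiff ℝ (⊤ : ℕ∞) f)
    (u : (Fin n → ℝ) → (Fin n → ℝ))
    (hu : u = fun x j => (Real.sqrt (μ x))⁻¹ * w x j + (μ x)⁻¹ * grad f x j
      - f x * grad (fun y => (μ y)⁻¹) x j)
    (p : (Fin n → ℝ) → ℝ)
    (hp : p = fun x => diverg (fun y k => Real.sqrt (μ y) * w y k) x + 2 * lap f x)
    (σ : Fin n → Fin n → (Fin n → ℝ) → ℝ)
    (hσ : σ = fun j k x => μ x * (pd j (fun y => u y k) x + pd k (fun y => u y j) x)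
      - p x * (if j = k then 1 else 0)) :
    ((∀ x, ∀ j, ∑ k, pd k (σ j k) x = 0) ∧ (∀ x, diverg u x = 0)) ↔
    ((∀ x, ∀ j,
        Real.sqrt (μ x) * lap (fun y => w y j) x
          - 2 * pd j (fun y => Real.sqrt (μ y)) x * diverg w x
          - 2 * (∑ k, pd k (fun y => μ y * pd j (pd k (fun z => (μ z)⁻¹)) y) x) * f x
          - 2 * μ x * (∑ k, pd j (pd k (fun z => (μ z)⁻¹)) x * pd k f x)
          - 2 * (∑ k, pd k (pd j (fun y => Real.sqrt (μ y))) x * w x k)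
          - lap (fun y => Real.sqrt (μ y)) x * w x j = 0) ∧
      (∀ x,
        (Real.sqrt (μ x))⁻¹ * diverg w x
          + inner' (grad (fun y => (Real.sqrt (μ y))⁻¹) x) (w x)
          + (μ x)⁻¹ * lap f x - f x * lap (fun y => (μ y)⁻¹) x = 0)) := by
  subst hσ hp hu
  obtain ⟨s, hspos, hsSm, rfl⟩ :
      ∃ s : (Fin n → ℝ) → ℝ, (∀ x, 0 < s x) ∧ Sm s ∧ μ = fun y => s y * s y := by
    refine ⟨fun y => Real.sqrt (μ y), fun x => Real.sqrt_pos.2 (hμpos x), ?_, ?_⟩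
    · intro x
      exact (Real.contDiffAt_sqrt (hμpos x).ne').comp x (hμ.contDiffAt.of_le (by simp))
    · funext y; exact (Real.mul_self_sqrt (hμpos y).le).symm
  have hs0 : ∀ x, s x ≠ 0 := fun x => (hspos x).ne'
  have hss0 : ∀ x : Fin n → ℝ, s x * s x ≠ 0 := fun x => mul_ne_zero (hs0 x) (hs0 x)
  have hsq : ∀ y : Fin n → ℝ, Real.sqrt (s y * s y) = s y := fun y =>
    Real.sqrt_mul_self (hspos y).le
  have hfSm : Sm f := fun x => hf.contDiffAt.of_le (by simp)
  have hwSm : ∀ k, Sm (fun y => w y k) := by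
    intro k x
    exact ((contDiff_pi.mp (hw.of_le (by simp))) k).contDiffAt
  simp only [hsq]
  refine and_congr
    (forall_congr' fun x => forall_congr' fun j => iff_of_eq (congrArg (· = 0) ?_))
    (forall_congr' fun x => iff_of_eq (congrArg (· = 0) ?_))
  · simp only [diverg, lap, grad, inner']
    simp (disch := repeat' (first
      | exact hsSm | exact hfSm | apply hwSm | exact hs0 _
      | apply Sm.pd | apply Sm.add | apply Sm.sub | apply Sm.neg | apply Sm.mul
      | apply Sm.inv | apply Sm.sum | apply Sm.const | intro _ | apply mul_ne_zero)) only
      [pd_add_fun, pd_sub_fun, pd_mul_fun, pd_inv_fun, pd_sum_fun, pd_const_fun, pd_neg_fun]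
    have Hj : ∀ (φ : (Fin n → ℝ) → ℝ), Sm φ → ∀ k : Fin n,
        pd k (pd j φ) = pd j (pd k φ) := fun φ hφ k => pd_comm_fun hφ k j
    simp only [mul_ite, mul_one, mul_zero, zero_mul, add_zero, zero_add, sub_zero]
    rw [Finset.sum_sub_distrib]
    simp only [Finset.sum_ite_eq, Finset.mem_univ, if_true]
    simp (disch := repeat' (first
      | exact hsSm | exact hfSm | apply hwSm | exact hs0 _
      | apply Sm.pd | apply Sm.add | apply Sm.sub | apply Sm.neg | apply Sm.mul
      | apply Sm.inv | apply Sm.sum | apply Sm.const | intro _ | apply mul_ne_zero)) only [Hj]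
    simp only [Finset.mul_sum, Finset.sum_mul]
    simp only [← Finset.sum_sub_distrib, ← Finset.sum_add_distrib]
    refine Finset.sum_congr rfl fun k _ => ?_
    have h1 := hs0 x
    field_simp
    ring
  · simp only [diverg, lap, grad, inner']
    simp (disch := repeat' (first
      | exact hsSm | exact hfSm | apply hwSm | exact hs0 _
      | apply Sm.pd | apply Sm.add | apply Sm.sub | apply Sm.neg | apply Sm.mul
      | apply Sm.inv | apply Sm.sum | apply Sm.const | intro _ | apply mul_ne_zero)) only
      [pd_add_fun, pd_sub_fun, pd_mul_fun, pd_inv_fun, pd_sum_fun, pd_const_fun, pd_neg_fun]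
    simp only [Finset.mul_sum, ← Finset.sum_add_distrib, ← Finset.sum_sub_distrib]
    refine Finset.sum_congr rfl fun k _ => ?_
    have h1 := hs0 x
    field_simp
    ring
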